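/- arXiv:2502.16968 — 4 statements merged into one kernel-verified Lean document; each statement's English description precedes it below -/
import Mathlib

section
/- Let $x, y \in \mathbb{R}_{\geq 0}^m$ with $y$ weakly majorized by $x$ (i.e. for every $k = 1, \ldots, m$, the sum of the $k$ largest entries of $y$ is at most the sum of the $k$ largest entries of $x$). Then $y$ lies in the convex hull of the set of points of the form $(\delta_1 x_{\sigma(1)}, \ldots, \delta_m x_{\sigma(m)})$, where $\sigma$ ranges over permutations of $\{1,\ldots,m\}$ and each $\delta_i \in \{0,1\}$. -/
open Finset

/-- Sum of the `k` largest entries of `x` (as the sup of sums over `k`-element subsets). -/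
noncomputable def sumLargest {m : ℕ} (x : Fin m → ℝ) (k : ℕ) : ℝ :=
  sSup ((fun s : Finset (Fin m) => ∑ i ∈ s, x i) '' {s | s.card = k})

/-- `y` is weakly majorized by `x`. -/
def WeaklyMajorizedBy {m : ℕ} (y x : Fin m → ℝ) : Prop :=
  ∀ k : ℕ, 1 ≤ k → k ≤ m → sumLargest y k ≤ sumLargest x k

/-- The set `E(x)` of vectors `(δ₁ x_{σ(1)}, …, δ_m x_{σ(m)})` with `σ` a permutation
and `δ_i ∈ {0,1}`. -/
def permZeroSet {m : ℕ} (x : Fin m → ℝ) : Set (Fin m → ℝ) :=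
  {z | ∃ (σ : Equiv.Perm (Fin m)) (δ : Fin m → ℝ),
    (∀ i, δ i = 0 ∨ δ i = 1) ∧ z = fun i => δ i * x (σ i)}

/-!
The convex hull of the finite set `E(x)` is closed, so it suffices to show that every linear
functional `v ↦ ∑ vᵢ cᵢ` is at least as large at some point of `E(x)` as at `y`. Since `y ≥ 0`
we may replace `c` by `c⁺ = max c 0`. Take `z ∈ E(x)` pairing the `k`-th largest entry of `c⁺`
with the `k`-th largest entry of `x`, with zeros where `c ≤ 0`. Listing `c⁺` in decreasing
order, Abel summation reduces `∑ yᵢ cᵢ⁺ ≤ ∑ zᵢ cᵢ⁺` to the inequalities between partial sums,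
and a sum of `k` entries of `y` is at most the sum of the `k` largest entries of `x` by weak
majorization.
-/

section Separation

variable {E : Type*} [TopologicalSpace E] [AddCommGroup E] [Module ℝ E] [T2Space E]
  [IsTopologicalAddGroup E] [ContinuousSMul ℝ E] [LocallyConvexSpace ℝ E]

theorem mem_convexHull_of_forall_exists_le {s : Set E} (hs : s.Finite) {y : E}
    (h : ∀ f : StrongDual ℝ E, ∃ z ∈ s, f y ≤ f z) : y ∈ convexHull ℝ s := by
  by_contra hy
  obtain ⟨f, u, hfs, hfy⟩ := geometric_hahn_banach_closed_point (convex_convexHull ℝ s)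
    (hs.isClosed_convexHull (𝕜 := ℝ)) hy
  obtain ⟨z, hz, hyz⟩ := h f
  linarith [hfs z (subset_convexHull ℝ s hz)]

end Separation

theorem exists_perm_antitone_comp {α : Type*} [LinearOrder α] {m : ℕ} (w : Fin m → α) :
    ∃ σ : Equiv.Perm (Fin m), Antitone (w ∘ σ) :=
  ⟨Tuple.sort (OrderDual.toDual ∘ w), monotone_toDual_comp_iff.1 (Tuple.monotone_sort _)⟩

theorem Fin.val_le_val_of_strictMono {k m : ℕ} {f : Fin k → Fin m} (hf : StrictMono f)
    (j : Fin k) : (j : ℕ) ≤ f j :=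
  calc (j : ℕ) = #((Iio j).image f) := by rw [card_image_of_injective _ hf.injective, card_Iio]
    _ ≤ #(Iio (f j)) := card_le_card <| by
      simp only [subset_iff, mem_image, mem_Iio, forall_exists_index, and_imp]
      rintro _ i hi rfl
      exact hf hi
    _ = f j := card_Iio _

theorem Antitone.sum_le_sum_castLE {M : Type*} [AddCommMonoid M] [PartialOrder M]
    [IsOrderedAddMonoid M] {m k : ℕ} {v : Fin m → M} (hv : Antitone v) {t : Finset (Fin m)}
    (ht : #t = k) (hk : k ≤ m) : ∑ i ∈ t, v i ≤ ∑ j : Fin k, v (Fin.castLE hk j) := by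
  rw [← map_orderEmbOfFin_univ t ht, sum_map]
  exact sum_le_sum fun j _ => hv (Fin.val_le_val_of_strictMono (t.orderEmbOfFin ht).strictMono j)

theorem sum_comp_le_sumLargest {m k : ℕ} (w : Fin m → ℝ) (e : Fin k ↪ Fin m) :
    ∑ j, w (e j) ≤ sumLargest w k :=
  le_csSup (Set.toFinite _).bddAbove ⟨univ.map e, by simp, by simp⟩

theorem sumLargest_eq_sum_of_antitone {m k : ℕ} (w : Fin m → ℝ) {σ : Equiv.Perm (Fin m)}
    (hσ : Antitone (w ∘ σ)) (hk : k ≤ m) :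
    sumLargest w k = ∑ j : Fin k, w (σ (Fin.castLE hk j)) := by
  refine le_antisymm (csSup_le ?_ ?_)
    (sum_comp_le_sumLargest w ((Fin.castLEEmb hk).trans σ.toEmbedding))
  · exact ⟨_, univ.map (Fin.castLEEmb hk), by simp, rfl⟩
  · rintro _ ⟨s, hs, rfl⟩
    have hcard : #(s.map σ.symm.toEmbedding) = k := by simpa using hs
    simpa using hσ.sum_le_sum_castLE hcard hk

theorem sum_mul_le_sum_mul_of_sum_castLE_le {R : Type*} [CommRing R] [PartialOrder R]
    [IsOrderedRing R] {m : ℕ} {a u v : Fin m → R} (ha : Antitone a) (ha0 : ∀ i, 0 ≤ a i)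
    (huv : ∀ k (hk : k ≤ m), ∑ j : Fin k, u (Fin.castLE hk j) ≤ ∑ j : Fin k, v (Fin.castLE hk j)) :
    ∑ i, a i * u i ≤ ∑ i, a i * v i := by
  induction m with
  | zero => simp
  | succ m ih =>
    -- Abel summation, one step: split off the smallest weight `a (last m)`.
    have split (w : Fin (m + 1) → R) : ∑ i, a i * w i =
        ∑ i : Fin m, (a i.castSucc - a (Fin.last m)) * w i.castSucc
          + a (Fin.last m) * ∑ i, w i := by
      simp only [Fin.sum_univ_castSucc, sub_mul, sum_sub_distrib, mul_add, mul_sum]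
      ring
    rw [split u, split v]
    refine add_le_add (ih (fun i j hij => by simpa using ha (Fin.castSucc_le_castSucc_iff.2 hij))
      (fun i => sub_nonneg.2 (ha ((Fin.castSucc_lt_last i).le)))
      (fun k hk => huv k (hk.trans m.le_succ))) ?_
    exact mul_le_mul_of_nonneg_left (by simpa using huv (m + 1) le_rfl) (ha0 _)

theorem permZeroSet_finite {m : ℕ} (x : Fin m → ℝ) : (permZeroSet x).Finite := by
  refine (Set.finite_range fun p : Equiv.Perm (Fin m) × (Fin m → Bool) =>
    fun i => (if p.2 i then 1 else 0) * x (p.1 i)).subset ?_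
  rintro _ ⟨σ, δ, hδ, rfl⟩
  refine ⟨(σ, fun i => δ i = 1), funext fun i => ?_⟩
  rcases hδ i with h | h <;> simp [h]

theorem exists_mem_permZeroSet_sum_mul_le {m : ℕ} {x y : Fin m → ℝ} (hy : ∀ i, 0 ≤ y i)
    (hmaj : WeaklyMajorizedBy y x) (c : Fin m → ℝ) :
    ∃ z ∈ permZeroSet x, ∑ i, y i * c i ≤ ∑ i, z i * c i := by
  set a : Fin m → ℝ := fun i => max (c i) 0
  obtain ⟨τ, hτ⟩ := exists_perm_antitone_comp a
  obtain ⟨ρ, hρ⟩ := exists_perm_antitone_comp x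
  have hpartial (k : ℕ) (hk : k ≤ m) :
      ∑ j : Fin k, y (τ (Fin.castLE hk j)) ≤ ∑ j : Fin k, x (ρ (Fin.castLE hk j)) := by
    rcases k.eq_zero_or_pos with rfl | hk0
    · simp
    calc _ ≤ sumLargest y k := sum_comp_le_sumLargest y ((Fin.castLEEmb hk).trans τ.toEmbedding)
      _ ≤ sumLargest x k := hmaj k hk0 hk
      _ = _ := sumLargest_eq_sum_of_antitone x hρ hk
  let δ i : ℝ := if 0 < c i then 1 else 0
  refine ⟨fun i => δ i * x ((τ.symm.trans ρ) i),
    ⟨_, δ, fun i => by by_cases h : 0 < c i <;> simp [δ, h], rfl⟩, ?_⟩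
  calc ∑ i, y i * c i ≤ ∑ i, a i * y i :=
        sum_le_sum fun i _ => by
          rw [mul_comm]; exact mul_le_mul_of_nonneg_right (le_max_left _ _) (hy i)
    _ = ∑ k, a (τ k) * y (τ k) := (Equiv.sum_comp τ _).symm
    _ ≤ ∑ k, a (τ k) * x (ρ k) :=
        sum_mul_le_sum_mul_of_sum_castLE_le hτ (fun _ => le_max_right _ _) hpartial
    _ = ∑ i, a i * x (ρ (τ.symm i)) := by
        rw [← Equiv.sum_comp τ fun i => a i * x (ρ (τ.symm i))]; simp
    _ = ∑ i, δ i * x ((τ.symm.trans ρ) i) * c i := sum_congr rfl fun i _ => by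
        by_cases h : 0 < c i
        · simp [a, δ, h, max_eq_left h.le, mul_comm]
        · simp [a, δ, h, max_eq_right (not_lt.1 h)]

theorem weaklyMajorized_mem_convexHull_general {m : ℕ} (x y : Fin m → ℝ)
    (hy : ∀ i, 0 ≤ y i)
    (hmaj : WeaklyMajorizedBy y x) :
    y ∈ convexHull ℝ (permZeroSet x) := by
  refine mem_convexHull_of_forall_exists_le (permZeroSet_finite x) fun f => ?_
  obtain ⟨z, hz, hyz⟩ := exists_mem_permZeroSet_sum_mul_le hy hmaj
    fun i => f fun j => if i = j then 1 else 0
  have hf (v : Fin m → ℝ) := f.toLinearMap.pi_apply_eq_sum_univ v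
  simp only [ContinuousLinearMap.coe_coe, smul_eq_mul] at hf
  exact ⟨z, hz, by rwa [hf y, hf z]⟩

theorem weaklyMajorized_mem_convexHull {m : ℕ} (x y : Fin m → ℝ)
    (hx : ∀ i, 0 ≤ x i) (hy : ∀ i, 0 ≤ y i)
    (hmaj : WeaklyMajorizedBy y x) :
    y ∈ convexHull ℝ (permZeroSet x) :=
  weaklyMajorized_mem_convexHull_general x y hy hmaj
end

section
/- Let $a \in \mathbb{R}_{\geq 0}^m$ with $a_1 \geq a_2 \geq \cdots \geq a_m$ and $a_1 > 1$. Then $a$ satisfies both conditions (i) $a_i a_j \leq 1$ for all $i \neq j$ and (ii) $\prod_{i=1}^m (1-a_i) + \sum_{i=1}^m (1-a_1)\cdots a_i \cdots (1-a_m) \geq 0$, if and only if $a_1 a_2 \leq 1$ and $\frac{1}{1-a_1} + \sum_{i=2}^m \frac{1}{1-a_i} \leq m - 1$. -/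
/-!
Since `a` is antitone and nonnegative, the largest pairwise product is `a₀ a₁`, so condition (i)
is just `a₀ a₁ ≤ 1`. Given that, `a₀ > 1` forces `a_i ≤ a₁ < 1` for `i ≥ 1`, so every `1 - a_i`
is nonzero and `P = ∏ (1 - a_i)` is negative. Factoring `P` out of the left side of (ii) gives
`P * (∑ 1 / (1 - a_i) - (m - 1))`, which is nonnegative exactly when the sum is at most `m - 1`.
-/

open Finset

theorem prod_one_sub_add_sum_mul_prod_erase {ι K : Type*} [Fintype ι] [DecidableEq ι] [Field K]
    (a : ι → K) (ha : ∀ i, a i ≠ 1) :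
    ∏ i, (1 - a i) + ∑ i, a i * ∏ j ∈ univ.erase i, (1 - a j)
      = (∏ i, (1 - a i)) * (∑ i, 1 / (1 - a i) - (Fintype.card ι - 1)) := by
  have hsummand : ∀ i, a i * ∏ j ∈ univ.erase i, (1 - a j)
      = (∏ j, (1 - a j)) * (1 / (1 - a i) - 1) := by
    intro i
    have hi : 1 - a i ≠ 0 := sub_ne_zero.2 (ha i).symm
    rw [← mul_prod_erase univ (fun j => 1 - a j) (mem_univ i)]
    field_simp
    ring
  simp only [hsummand, ← mul_sum, sum_sub_distrib, sum_const, card_univ, nsmul_eq_mul, mul_one]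
  ring

theorem pairwise_mul_le_one_iff_of_antitone {m : ℕ} (hm : 2 ≤ m) {a : Fin m → ℝ}
    (h0 : ∀ i, 0 ≤ a i) (hsort : Antitone a) :
    (∀ i j, i ≠ j → a i * a j ≤ 1) ↔
      a ⟨0, Nat.zero_lt_two.trans_le hm⟩ * a ⟨1, Nat.one_lt_two.trans_le hm⟩ ≤ 1 := by
  refine ⟨fun h => h _ _ (by simp [Fin.ext_iff]), fun h01 => ?_⟩
  have hlt : ∀ i j : Fin m, i < j → a i * a j ≤ 1 := fun i j hij =>
    calc a i * a j ≤ a ⟨0, Nat.zero_lt_two.trans_le hm⟩ * a ⟨1, Nat.one_lt_two.trans_le hm⟩ :=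
          mul_le_mul (hsort (Fin.mk_le_of_le_val (Nat.zero_le _)))
            (hsort (Fin.mk_le_of_le_val (by omega))) (h0 j) (h0 _)
      _ ≤ 1 := h01
  intro i j hij
  rcases hij.lt_or_gt with hij | hij
  · exact hlt i j hij
  · exact mul_comm (a i) (a j) ▸ hlt j i hij

theorem lt_one_of_ne_zero_of_antitone {m : ℕ} (hm : 2 ≤ m) {a : Fin m → ℝ}
    (hsort : Antitone a) (h1 : 1 < a ⟨0, Nat.zero_lt_two.trans_le hm⟩)
    (h01 : a ⟨0, Nat.zero_lt_two.trans_le hm⟩ * a ⟨1, Nat.one_lt_two.trans_le hm⟩ ≤ 1)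
    {i : Fin m} (hi : i ≠ ⟨0, Nat.zero_lt_two.trans_le hm⟩) :
    a i < 1 := by
  have hi1 : a i ≤ a ⟨1, Nat.one_lt_two.trans_le hm⟩ :=
    hsort (Fin.mk_le_of_le_val (by simp only [Ne, Fin.ext_iff] at hi; omega))
  nlinarith

theorem prod_one_sub_neg_of_antitone {m : ℕ} (hm : 2 ≤ m) {a : Fin m → ℝ}
    (hsort : Antitone a) (h1 : 1 < a ⟨0, Nat.zero_lt_two.trans_le hm⟩)
    (h01 : a ⟨0, Nat.zero_lt_two.trans_le hm⟩ * a ⟨1, Nat.one_lt_two.trans_le hm⟩ ≤ 1) :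
    ∏ i, (1 - a i) < 0 := by
  rw [← mul_prod_erase univ (fun i => 1 - a i) (mem_univ ⟨0, Nat.zero_lt_two.trans_le hm⟩)]
  refine mul_neg_of_neg_of_pos (by linarith) (prod_pos fun j hj => ?_)
  linarith [lt_one_of_ne_zero_of_antitone hm hsort h1 h01 (ne_of_mem_erase hj)]

theorem mem_Nbar_iff_of_first_gt_one {m : ℕ} (hm : 2 ≤ m) (a : Fin m → ℝ)
    (h0 : ∀ i, 0 ≤ a i) (hsort : Antitone a)
    (h1 : 1 < a ⟨0, by omega⟩) :
    ((∀ i j, i ≠ j → a i * a j ≤ 1) ∧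
      0 ≤ ∏ i, (1 - a i) + ∑ i, a i * ∏ j ∈ univ.erase i, (1 - a j))
    ↔ (a ⟨0, by omega⟩ * a ⟨1, by omega⟩ ≤ 1 ∧
        ∑ i, 1 / (1 - a i) ≤ (m : ℝ) - 1) := by
  rw [pairwise_mul_le_one_iff_of_antitone hm h0 hsort]
  refine and_congr_right fun h01 => ?_
  have hne : ∀ i, a i ≠ 1 := fun i => by
    by_cases hi : i = ⟨0, by omega⟩
    · exact hi ▸ h1.ne'
    · exact (lt_one_of_ne_zero_of_antitone hm hsort h1 h01 hi).ne
  have hP := prod_one_sub_neg_of_antitone hm hsort h1 h01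
  rw [prod_one_sub_add_sum_mul_prod_erase a hne, Fintype.card_fin, ← neg_mul_neg,
    mul_nonneg_iff_of_pos_left (neg_pos.2 hP), neg_nonneg, sub_nonpos]
end

section
/- Let $m \geq 3$ and let $a \in \mathbb{R}_{\geq 0}^m$ with $a_1 \geq a_2 \geq \cdots \geq a_m \geq 0$. Then $\prod_{i=1}^m (1 + a_i) \geq 1 + \sum_{i=1}^m a_i + (a_1 + a_2) \sum_{i=3}^m a_i$. -/
/-!
Split off the first two factors: `(1 + a₁)(1 + a₂) ≥ 1 + a₁ + a₂` and
`∏_{i ≥ 3} (1 + aᵢ) ≥ 1 + ∑_{i ≥ 3} aᵢ` (expand the product of nonnegative terms), and the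
product of the two lower bounds is exactly the right-hand side.
-/

open Finset

section OrderedSemiring

variable {ι R : Type*} [CommSemiring R] [PartialOrder R] [IsOrderedRing R] {a : ι → R}

theorem Finset.one_add_sum_le_prod_one_add [DecidableEq ι] (s : Finset ι)
    (h0 : ∀ i ∈ s, 0 ≤ a i) : 1 + ∑ i ∈ s, a i ≤ ∏ i ∈ s, (1 + a i) := by
  induction s using Finset.induction_on with
  | empty => simp
  | @insert x s hx ih =>
    rw [sum_insert hx, prod_insert hx]
    have hx0 : 0 ≤ a x := h0 x (mem_insert_self x s)
    have hs0 : ∀ i ∈ s, 0 ≤ a i := fun i hi => h0 i (mem_insert_of_mem hi)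
    calc 1 + (a x + ∑ i ∈ s, a i)
        ≤ 1 + (a x + ∑ i ∈ s, a i) + a x * ∑ i ∈ s, a i :=
          le_add_of_nonneg_right (mul_nonneg hx0 (sum_nonneg hs0))
      _ = (1 + a x) * (1 + ∑ i ∈ s, a i) := by ring
      _ ≤ (1 + a x) * ∏ i ∈ s, (1 + a i) := by
          gcongr
          · exact add_nonneg zero_le_one hx0
          · exact ih hs0

theorem Finset.one_add_sum_add_mul_sum_le_prod_one_add_insert_insert [DecidableEq ι]
    {s : Finset ι} {i j : ι} (hij : i ≠ j) (hi : i ∉ s) (hj : j ∉ s)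
    (h0 : ∀ k ∈ insert i (insert j s), 0 ≤ a k) :
    1 + ∑ k ∈ insert i (insert j s), a k + (a i + a j) * ∑ k ∈ s, a k ≤
      ∏ k ∈ insert i (insert j s), (1 + a k) := by
  have hij' : i ∉ insert j s := by simp [hij, hi]
  rw [sum_insert hij', sum_insert hj, prod_insert hij', prod_insert hj]
  have hi0 : 0 ≤ a i := h0 i (by simp)
  have hj0 : 0 ≤ a j := h0 j (by simp)
  have hs0 : ∀ k ∈ s, 0 ≤ a k := fun k hk => h0 k (by simp [hk])
  calc 1 + (a i + (a j + ∑ k ∈ s, a k)) + (a i + a j) * ∑ k ∈ s, a k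
      ≤ 1 + (a i + (a j + ∑ k ∈ s, a k)) + (a i + a j) * ∑ k ∈ s, a k
          + a i * a j * (1 + ∑ k ∈ s, a k) :=
        le_add_of_nonneg_right
          (mul_nonneg (mul_nonneg hi0 hj0) (add_nonneg zero_le_one (sum_nonneg hs0)))
    _ = (1 + a i) * (1 + a j) * (1 + ∑ k ∈ s, a k) := by ring
    _ ≤ (1 + a i) * (1 + a j) * ∏ k ∈ s, (1 + a k) := by
        gcongr
        · exact mul_nonneg (add_nonneg zero_le_one hi0) (add_nonneg zero_le_one hj0)
        · exact one_add_sum_le_prod_one_add s hs0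
    _ = (1 + a i) * ((1 + a j) * ∏ k ∈ s, (1 + a k)) := mul_assoc _ _ _

end OrderedSemiring

theorem Fin.univ_eq_insert_zero_insert_one_filter {m : ℕ} (hm : 2 ≤ m) :
    (univ : Finset (Fin m)) =
      insert ⟨0, by omega⟩ (insert ⟨1, by omega⟩ (univ.filter fun i : Fin m => 2 ≤ (i : ℕ))) := by
  ext i
  simp only [mem_univ, mem_insert, mem_filter, true_and, true_iff, Fin.ext_iff]
  omega

theorem prod_ge_one_add_sum {m : ℕ} (hm : 3 ≤ m) (a : Fin m → ℝ)
    (h0 : ∀ i, 0 ≤ a i) :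
    ∏ i, (1 + a i) ≥
      1 + ∑ i, a i +
        (a ⟨0, by omega⟩ + a ⟨1, by omega⟩) *
          ∑ i ∈ univ.filter (fun i : Fin m => 2 ≤ (i : ℕ)), a i := by
  have key := one_add_sum_add_mul_sum_le_prod_one_add_insert_insert (a := a)
    (s := univ.filter fun i : Fin m => 2 ≤ (i : ℕ)) (i := ⟨0, by omega⟩) (j := ⟨1, by omega⟩)
    (by simp [Fin.ext_iff]) (by simp) (by simp) (fun k _ => h0 k)
  rwa [← Fin.univ_eq_insert_zero_insert_one_filter (by omega)] at key
end

section
/- Let $\mathcal{C} \subseteq \mathbb{R}_{\geq 0}^m$ be a convex set symmetric under permutations of coordinates, and let $\overline{\mathcal{N}}$ denote the set of $a \in \mathbb{R}_{\geq 0}^m$ satisfying $a_i a_j \leq 1$ for all $i \neq j$ and $\prod_{i=1}^m (1-a_i) + \sum_{i=1}^m (1-a_1)\cdots a_i \cdots (1-a_m) \geq 0$. If $x \in \mathcal{C} \subseteq \overline{\mathcal{N}}$, then every $y \in \mathbb{R}_{\geq 0}^m$ that is weakly majorized by $x$ (i.e. for each $k$, the sum of the $k$ largest entries of $y$ is at most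 that of $x$) also lies in $\overline{\mathcal{N}}$. -/
/-!
If every `y i ≤ 1`, the polynomial defining `Nbar` is visibly nonnegative. Otherwise sort `y`,
so that `t = y 0 > 1`. Averaging a point of `C` with its image under a transposition shows that
pairwise sums in `C` are at most `2`; weak majorization passes this to `y`, so all other entries
of `y` are `< 1`. For `a = (t, u)` with all `u j ≠ 1` the polynomial factors as
`∏ (1 - u j) * (1 - (t - 1) * ∑ u j / (1 - u j))`. It therefore suffices to find `z ∈ C` with
`z 0 = t` whose tail weakly majorizes the tail of `y`: Abel summation (the Tomić–Weyl inequality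
for the convex increasing map `u ↦ u / (1 - u)`) then carries nonnegativity from `z` to `y`.
-/

open Finset

/-- The region `𝒩̄`. -/
def Nbar (m : ℕ) : Set (Fin m → ℝ) :=
  {a | (∀ i, 0 ≤ a i) ∧ (∀ i j, i ≠ j → a i * a j ≤ 1) ∧
    0 ≤ ∏ i, (1 - a i) + ∑ i, a i * ∏ j ∈ univ.erase i, (1 - a j)}

section SumLargest

variable {m : ℕ}

theorem sum_le_sumLargest (x : Fin m → ℝ) {k : ℕ} {s : Finset (Fin m)} (hs : #s = k) :
    ∑ i ∈ s, x i ≤ sumLargest x k :=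
  le_csSup (((Set.toFinite _).image _).bddAbove) ⟨s, hs, rfl⟩

theorem sumLargest_le (x : Fin m → ℝ) {k : ℕ} (hk : k ≤ m) {c : ℝ}
    (h : ∀ s : Finset (Fin m), #s = k → ∑ i ∈ s, x i ≤ c) : sumLargest x k ≤ c := by
  obtain ⟨s, -, hs⟩ := exists_subset_card_eq (s := (univ : Finset (Fin m))) (by simpa using hk)
  exact csSup_le ⟨_, s, hs, rfl⟩ (by rintro _ ⟨s, hs, rfl⟩; exact h s hs)

theorem sumLargest_comp_perm (x : Fin m → ℝ) (σ : Equiv.Perm (Fin m)) (k : ℕ) :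
    sumLargest (x ∘ σ) k = sumLargest x k := by
  unfold sumLargest
  congr 1
  ext r
  refine ⟨?_, ?_⟩
  · rintro ⟨s, hs, rfl⟩
    exact ⟨s.map σ.toEmbedding, by simpa using hs, by simp⟩
  · rintro ⟨s, hs, rfl⟩
    exact ⟨s.map σ.symm.toEmbedding, by simpa using hs, by simp⟩

theorem exists_perm_antitone (x : Fin m → ℝ) :
    ∃ σ : Equiv.Perm (Fin m), Antitone (x ∘ σ) :=
  ⟨Tuple.sort (OrderDual.toDual ∘ x), Tuple.monotone_sort (OrderDual.toDual ∘ x)⟩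

theorem sumLargest_tail_le {n : ℕ} (x : Fin (n + 1) → ℝ) {k : ℕ} (hk : k ≤ n) :
    sumLargest (Fin.tail x) k ≤ sumLargest x k :=
  sumLargest_le _ hk fun s hs => by
    simpa [Fin.tail] using sum_le_sumLargest x (s := s.map (Fin.succEmb n)) (by simpa using hs)

theorem add_sumLargest_tail_le {n : ℕ} (x : Fin (n + 1) → ℝ) {k : ℕ} (hk : k ≤ n) :
    x 0 + sumLargest (Fin.tail x) k ≤ sumLargest x (k + 1) := by
  rw [← le_sub_iff_add_le']
  refine sumLargest_le _ hk fun s hs => le_sub_iff_add_le'.2 ?_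
  have h0 : (0 : Fin (n + 1)) ∉ s.map (Fin.succEmb n) := by simp [Fin.succ_ne_zero]
  simpa [Fin.tail, h0] using
    sum_le_sumLargest x (s := (s.map (Fin.succEmb n)).cons 0 h0) (by simp [hs])

def toSeq (x : Fin m → ℝ) (j : ℕ) : ℝ := if h : j < m then x ⟨j, h⟩ else 0

@[simp] theorem toSeq_val (x : Fin m → ℝ) (i : Fin m) : toSeq x i = x i := dif_pos i.isLt

theorem toSeq_of_lt (x : Fin m → ℝ) {j : ℕ} (h : j < m) : toSeq x j = x ⟨j, h⟩ :=
  dif_pos h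

theorem sum_range_toSeq (x : Fin m → ℝ) {k : ℕ} (hk : k ≤ m) :
    ∑ j ∈ range k, toSeq x j = ∑ i : Fin k, x (Fin.castLE hk i) := by
  rw [← Fin.sum_univ_eq_sum_range]
  exact sum_congr rfl fun i _ => toSeq_val x (Fin.castLE hk i)

theorem sum_range_toSeq_le_sumLargest (x : Fin m → ℝ) {k : ℕ} (hk : k ≤ m) :
    ∑ j ∈ range k, toSeq x j ≤ sumLargest x k := by
  rw [sum_range_toSeq x hk]
  simpa using sum_le_sumLargest x (s := univ.map (Fin.castLEEmb hk)) (by simp)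

theorem val_le_val_orderEmbedding {k : ℕ} (f : Fin k ↪o Fin m) (i : Fin k) : (i : ℕ) ≤ f i := by
  calc (i : ℕ) = #((Iio i).map f.toEmbedding) := by simp
    _ ≤ #(Iio (f i)) := card_le_card fun j => by
        simp only [mem_map, mem_Iio]
        rintro ⟨l, hl, rfl⟩
        exact f.lt_iff_lt.2 hl
    _ = f i := Fin.card_Iio _

theorem sumLargest_eq_sum_range_toSeq {x : Fin m → ℝ} (hx : Antitone x) {k : ℕ} (hk : k ≤ m) :
    sumLargest x k = ∑ j ∈ range k, toSeq x j := by
  refine le_antisymm (sumLargest_le x hk fun s hs => ?_) (sum_range_toSeq_le_sumLargest x hk)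
  rw [sum_range_toSeq x hk, ← map_orderEmbOfFin_univ s hs, sum_map]
  exact sum_le_sum fun i _ => hx (Fin.le_def.2 (val_le_val_orderEmbedding _ i))

end SumLargest

theorem sum_range_mul_nonpos {c d : ℕ → ℝ} {N : ℕ} (hc₀ : ∀ i < N, 0 ≤ c i)
    (hc : ∀ i, i + 1 < N → c (i + 1) ≤ c i) (hd : ∀ k ≤ N, ∑ j ∈ range k, d j ≤ 0) :
    ∑ j ∈ range N, c j * d j ≤ 0 := by
  rcases N.eq_zero_or_pos with rfl | hN
  · simp
  have h := sum_range_by_parts c d N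
  simp only [smul_eq_mul] at h
  rw [h, sub_nonpos]
  refine (mul_nonpos_of_nonneg_of_nonpos (hc₀ _ (by omega)) (hd N le_rfl)).trans
    (sum_nonneg fun i hi => ?_)
  rw [mem_range] at hi
  exact mul_nonneg_of_nonpos_of_nonpos (sub_nonpos.2 (hc i (by omega))) (hd _ (by omega))

theorem sum_div_one_sub_le_of_antitone {N : ℕ} {u v : Fin N → ℝ} (hua : Antitone u)
    (hva : Antitone v) (hu : ∀ i, u i < 1) (hv : ∀ i, v i < 1) (h : WeaklyMajorizedBy u v) :
    ∑ i, u i / (1 - u i) ≤ ∑ i, v i / (1 - v i) := by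
  set c : ℕ → ℝ := fun j => ((1 - toSeq u j) * (1 - toSeq v j))⁻¹
  set d : ℕ → ℝ := fun j => toSeq u j - toSeq v j
  have hdiff : ∀ i, u i / (1 - u i) - v i / (1 - v i) = c i * d i := fun i => by
    have := (sub_pos.2 (hu i)).ne'
    have := (sub_pos.2 (hv i)).ne'
    simp only [c, d, toSeq_val]
    field_simp
    ring
  rw [← sub_nonpos, ← sum_sub_distrib, sum_congr rfl fun i _ => hdiff i,
    Fin.sum_univ_eq_sum_range (fun j => c j * d j)]
  refine sum_range_mul_nonpos (fun i hi => ?_) (fun i hi => ?_) (fun k hk => ?_)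
  · simp only [c, toSeq_of_lt u hi, toSeq_of_lt v hi]
    exact (inv_pos.2 (mul_pos (sub_pos.2 (hu _)) (sub_pos.2 (hv _)))).le
  · simp only [c, toSeq_of_lt u hi, toSeq_of_lt v hi, toSeq_of_lt u (Nat.lt_of_succ_lt hi),
      toSeq_of_lt v (Nat.lt_of_succ_lt hi)]
    have hle : ∀ w : Fin N → ℝ, Antitone w → w ⟨i + 1, hi⟩ ≤ w ⟨i, by omega⟩ :=
      fun w hw => hw (Fin.le_def.2 (by simp))
    exact inv_anti₀ (mul_pos (sub_pos.2 (hu _)) (sub_pos.2 (hv _)))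
      (mul_le_mul (by linarith [hle u hua]) (by linarith [hle v hva]) (sub_pos.2 (hv _)).le
        (by linarith [hu ⟨i + 1, hi⟩]))
  · rcases k.eq_zero_or_pos with rfl | hk₀
    · simp
    simp only [d, sum_sub_distrib, ← sumLargest_eq_sum_range_toSeq hua hk,
      ← sumLargest_eq_sum_range_toSeq hva hk, sub_nonpos]
    exact h k hk₀ hk

theorem sum_div_one_sub_le {N : ℕ} {u v : Fin N → ℝ} (hu : ∀ i, u i < 1) (hv : ∀ i, v i < 1)
    (h : WeaklyMajorizedBy u v) : ∑ i, u i / (1 - u i) ≤ ∑ i, v i / (1 - v i) := by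
  obtain ⟨σ, hσ⟩ := exists_perm_antitone u
  obtain ⟨τ, hτ⟩ := exists_perm_antitone v
  have := sum_div_one_sub_le_of_antitone hσ hτ (fun i => hu _) (fun i => hv _)
    fun k hk₁ hk => by simpa only [sumLargest_comp_perm] using h k hk₁ hk
  simpa only [Function.comp_apply, Equiv.sum_comp σ (fun i => u i / (1 - u i)),
    Equiv.sum_comp τ (fun i => v i / (1 - v i))] using this

def nbarPoly {m : ℕ} (a : Fin m → ℝ) : ℝ :=
  ∏ i, (1 - a i) + ∑ i, a i * ∏ j ∈ univ.erase i, (1 - a j)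

section NbarPoly

variable {m : ℕ}

theorem mem_Nbar_iff {a : Fin m → ℝ} :
    a ∈ Nbar m ↔ (∀ i, 0 ≤ a i) ∧ (∀ i j, i ≠ j → a i * a j ≤ 1) ∧ 0 ≤ nbarPoly a :=
  Iff.rfl

theorem nbarPoly_comp_perm (a : Fin m → ℝ) (σ : Equiv.Perm (Fin m)) :
    nbarPoly (a ∘ σ) = nbarPoly a := by
  have h : ∀ i, ∏ j ∈ univ.erase i, (1 - a (σ j)) = ∏ j ∈ univ.erase (σ i), (1 - a j) :=
    fun i => prod_equiv σ (by simp) (by simp)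
  simp only [nbarPoly, Function.comp_apply, h]
  rw [Equiv.prod_comp σ (fun i => 1 - a i),
    Equiv.sum_comp σ (fun i => a i * ∏ j ∈ univ.erase i, (1 - a j))]

theorem comp_perm_mem_Nbar {a : Fin m → ℝ} (ha : a ∈ Nbar m) (σ : Equiv.Perm (Fin m)) :
    a ∘ σ ∈ Nbar m := by
  obtain ⟨h₀, h₁, h₂⟩ := mem_Nbar_iff.1 ha
  exact mem_Nbar_iff.2 ⟨fun i => h₀ _, fun i j hij => h₁ _ _ (σ.injective.ne hij),
    h₂.trans_eq (nbarPoly_comp_perm a σ).symm⟩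

theorem nbarPoly_nonneg {a : Fin m → ℝ} (h₀ : ∀ i, 0 ≤ a i) (h₁ : ∀ i, a i ≤ 1) :
    0 ≤ nbarPoly a :=
  add_nonneg (prod_nonneg fun i _ => sub_nonneg.2 (h₁ i))
    (sum_nonneg fun i _ => mul_nonneg (h₀ i) (prod_nonneg fun j _ => sub_nonneg.2 (h₁ j)))

theorem prod_erase_eq_prod_succAbove {M : Type*} [CommMonoid M] {n : ℕ} (f : Fin (n + 1) → M)
    (p : Fin (n + 1)) :
    ∏ j ∈ univ.erase p, f j = ∏ j, f (p.succAbove j) := by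
  rw [Fin.univ_succAbove n p, erase_cons, prod_map]
  rfl

theorem nbarPoly_cons {n : ℕ} (t : ℝ) (u : Fin n → ℝ) (hu : ∀ j, u j ≠ 1) :
    nbarPoly (Fin.cons t u : Fin (n + 1) → ℝ) =
      (∏ j, (1 - u j)) * (1 - (t - 1) * ∑ j, u j / (1 - u j)) := by
  cases n with
  | zero => simp [nbarPoly]
  | succ n => ?_
  set Q := ∏ j, (1 - u j)
  have hQ : ∀ j, ∏ k, (1 - u (j.succAbove k)) = Q / (1 - u j) := fun j =>
    eq_div_of_mul_eq (sub_ne_zero.2 (hu j).symm)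
      (by rw [mul_comm, ← Fin.prod_univ_succAbove (fun k => 1 - u k) j])
  have hsum : ∑ j, u j * ((1 - t) * ∏ k, (1 - u (j.succAbove k))) =
      (1 - t) * Q * ∑ j, u j / (1 - u j) := by
    rw [mul_sum]
    refine sum_congr rfl fun j _ => ?_
    rw [hQ]
    ring
  have hterm : ∀ j : Fin (n + 1),
      ∏ k, (1 - (Fin.cons t u : Fin (n + 2) → ℝ) (j.succ.succAbove k)) =
        (1 - t) * ∏ k, (1 - u (j.succAbove k)) := fun j => by
    simp [Fin.prod_univ_succ, Fin.succ_succAbove_succ]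
  simp only [nbarPoly, prod_erase_eq_prod_succAbove]
  rw [Fin.prod_univ_succ, Fin.sum_univ_succ]
  simp only [hterm, Fin.cons_zero, Fin.cons_succ, Fin.succAbove_zero, hsum]
  ring

end NbarPoly

theorem nbarPoly_cons_nonneg_of_weaklyMajorizedBy {n : ℕ} {t : ℝ} (ht : 1 ≤ t)
    {u w : Fin n → ℝ} (hu : ∀ j, u j < 1) (hw : ∀ j, w j < 1) (h : WeaklyMajorizedBy u w)
    (hw₀ : 0 ≤ nbarPoly (Fin.cons t w : Fin (n + 1) → ℝ)) :
    0 ≤ nbarPoly (Fin.cons t u : Fin (n + 1) → ℝ) := by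
  have hpos : ∀ v : Fin n → ℝ, (∀ j, v j < 1) → 0 < ∏ j, (1 - v j) :=
    fun v hv => prod_pos fun j _ => sub_pos.2 (hv j)
  rw [nbarPoly_cons t w fun j => (hw j).ne, mul_nonneg_iff_of_pos_left (hpos w hw)] at hw₀
  rw [nbarPoly_cons t u fun j => (hu j).ne]
  refine mul_nonneg (hpos u hu).le ?_
  nlinarith [mul_le_mul_of_nonneg_left (sum_div_one_sub_le hu hw h) (sub_nonneg.2 ht)]

section Region

variable {m : ℕ} {C : Set (Fin m → ℝ)}

theorem update_update_mem_of_mem_segment (hconv : Convex ℝ C)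
    (hsym : ∀ a ∈ C, ∀ σ : Equiv.Perm (Fin m), a ∘ σ ∈ C) {a : Fin m → ℝ} (ha : a ∈ C)
    {i j : Fin m} (hij : i ≠ j) {t : ℝ} (ht : t ∈ segment ℝ (a j) (a i)) :
    Function.update (Function.update a i t) j (a i + a j - t) ∈ C := by
  obtain ⟨α, β, hα, hβ, hαβ, rfl⟩ := ht
  convert hconv (hsym a ha (Equiv.swap i j)) ha hα hβ hαβ using 1
  ext k
  rcases eq_or_ne k j with rfl | hkj
  · simp
    linear_combination (-(a i + a k)) * hαβ
  rcases eq_or_ne k i with rfl | hki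
  · simp [hij]
  · simp [hkj, hki, Equiv.swap_apply_of_ne_of_ne hki hkj]
    linear_combination (-a k) * hαβ

theorem add_le_two_of_mem (hconv : Convex ℝ C)
    (hsym : ∀ a ∈ C, ∀ σ : Equiv.Perm (Fin m), a ∘ σ ∈ C) (hCN : C ⊆ Nbar m)
    {a : Fin m → ℝ} (ha : a ∈ C) {i j : Fin m} (hij : i ≠ j) : a i + a j ≤ 2 := by
  have hmid : (a i + a j) / 2 ∈ segment ℝ (a j) (a i) :=
    ⟨1 / 2, 1 / 2, by norm_num, by norm_num, by norm_num, by simp; ring⟩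
  obtain ⟨h₀, h₁, -⟩ := hCN (update_update_mem_of_mem_segment hconv hsym ha hij hmid)
  have hi := h₀ i
  have hprod := h₁ i j hij
  simp [hij] at hi hprod
  nlinarith

theorem add_le_two_of_weaklyMajorizedBy (hconv : Convex ℝ C)
    (hsym : ∀ a ∈ C, ∀ σ : Equiv.Perm (Fin m), a ∘ σ ∈ C) (hCN : C ⊆ Nbar m)
    {x y : Fin m → ℝ} (hx : x ∈ C) (hmaj : WeaklyMajorizedBy y x) {i j : Fin m} (hij : i ≠ j) :
    y i + y j ≤ 2 := by
  have hm : 2 ≤ m := by simpa [card_pair hij] using card_le_univ {i, j}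
  calc y i + y j = ∑ k ∈ {i, j}, y k := (sum_pair hij).symm
    _ ≤ sumLargest y 2 := sum_le_sumLargest y (card_pair hij)
    _ ≤ sumLargest x 2 := hmaj 2 one_le_two hm
    _ ≤ 2 := sumLargest_le x hm fun s hs => by
        obtain ⟨a, b, hab, rfl⟩ := card_eq_two.1 hs
        rw [sum_pair hab]
        exact add_le_two_of_mem hconv hsym hCN hx hab

end Region

theorem sum_range_merge (X : ℕ → ℝ) (p : ℕ) (t : ℝ) (k : ℕ) :
    ∑ j ∈ range k, (if j < p then X j else if j = p then X p + X (p + 1) - t else X (j + 1)) =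
      if k ≤ p then ∑ j ∈ range k, X j else ∑ j ∈ range (k + 1), X j - t := by
  induction k with
  | zero => simp
  | succ k ih =>
    rw [sum_range_succ, ih]
    rcases lt_trichotomy k p with h | rfl | h
    · simp [h, h.le, Nat.succ_le_of_lt h, sum_range_succ]
    · simp [sum_range_succ]
      ring
    · simp [h.ne', h.not_gt, h.not_ge, show ¬ k + 1 ≤ p by omega, sum_range_succ]
      ring

theorem exists_le_castSucc_and_succ_lt {n : ℕ} {x : Fin (n + 2) → ℝ} {t : ℝ} (h₀ : t ≤ x 0)
    (hlast : x (Fin.last (n + 1)) < t) : ∃ p : Fin (n + 1), t ≤ x p.castSucc ∧ x p.succ < t := by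
  set s := univ.filter fun i => x i < t
  have hs : s.Nonempty := ⟨_, mem_filter.2 ⟨mem_univ _, hlast⟩⟩
  have hmin : x (s.min' hs) < t := (mem_filter.1 (s.min'_mem hs)).2
  obtain ⟨p, hp⟩ := Fin.exists_succ_eq.2 fun h : s.min' hs = 0 => (h ▸ hmin).not_ge h₀
  refine ⟨p, not_lt.1 fun h => ?_, hp ▸ hmin⟩
  exact p.castSucc_lt_succ.not_ge (hp ▸ s.min'_le _ (mem_filter.2 ⟨mem_univ _, h⟩))

/- With `x p ≥ t > x (p + 1)`, rotate `x p` to the front and move the mass `x p - t` from there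
to position `p + 1`. The tail of the result is
`x 0, …, x (p - 1), x p + x (p + 1) - t, x (p + 2), …`, whose prefix sums are `sumLargest x k`
for `k ≤ p` and `sumLargest x (k + 1) - t` beyond. -/
theorem exists_mem_min_le_sumLargest_tail {n : ℕ} {C : Set (Fin (n + 2) → ℝ)}
    (hconv : Convex ℝ C) (hsym : ∀ a ∈ C, ∀ σ : Equiv.Perm (Fin (n + 2)), a ∘ σ ∈ C)
    {x : Fin (n + 2) → ℝ} (hx : x ∈ C) (hxa : Antitone x) {t : ℝ} (h₀ : t ≤ x 0)
    (hlast : x (Fin.last (n + 1)) < t) :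
    ∃ z ∈ C, z 0 = t ∧ ∀ k ≤ n + 1,
      min (sumLargest x k) (sumLargest x (k + 1) - t) ≤ sumLargest (Fin.tail z) k := by
  obtain ⟨p, hp, hq⟩ := exists_le_castSucc_and_succ_lt h₀ hlast
  set v := x ∘ p.castSucc.cycleRange.symm
  have hv0 : v 0 = x p.castSucc := by simp [v]
  have hvsucc : ∀ j, v j.succ = x (p.castSucc.succAbove j) := by simp [v]
  set z := Function.update (Function.update v 0 t) p.succ (v 0 + v p.succ - t)
  have hz : z ∈ C := by
    refine update_update_mem_of_mem_segment hconv hsym (show v ∈ C from hsym x hx _)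
      (Fin.succ_ne_zero p).symm ?_
    rw [hv0, hvsucc, Fin.succAbove_castSucc_self, segment_eq_Icc (hxa p.castSucc_lt_succ.le)]
    exact ⟨hq.le, hp⟩
  have hX : ∀ j : Fin (n + 1), toSeq x j = x j.castSucc := fun j => toSeq_val x j.castSucc
  have hX' : ∀ j : Fin (n + 1), toSeq x (j + 1) = x j.succ := fun j => toSeq_val x j.succ
  have htail : ∀ j : Fin (n + 1), Fin.tail z j = if (j : ℕ) < p then toSeq x j
      else if (j : ℕ) = p then toSeq x p + toSeq x (p + 1) - t else toSeq x (j + 1) := by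
    intro j
    rcases lt_trichotomy j p with h | rfl | h
    · simp [z, Fin.tail, h, h.ne, hvsucc, Fin.succAbove_castSucc_of_lt _ _ h, hX]
    · simp [z, Fin.tail, hv0, hvsucc, hX, hX']
    · simp [z, Fin.tail, h.ne', Fin.lt_def.not.2 h.not_gt, hvsucc,
        Fin.succAbove_castSucc_of_le _ _ h.le, hX', Fin.val_ne_of_ne h.ne']
  refine ⟨z, hz, ?_, fun k hk => ?_⟩
  · simp only [z, Function.update_of_ne (Fin.succ_ne_zero p).symm, Function.update_self]
  calc min (sumLargest x k) (sumLargest x (k + 1) - t)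
      ≤ if k ≤ p then ∑ j ∈ range k, toSeq x j else ∑ j ∈ range (k + 1), toSeq x j - t := by
        rw [sumLargest_eq_sum_range_toSeq hxa (by omega),
          sumLargest_eq_sum_range_toSeq hxa (by omega)]
        split_ifs
        exacts [min_le_left _ _, min_le_right _ _]
    _ = ∑ j ∈ range k, toSeq (Fin.tail z) j := by
        rw [← sum_range_merge]
        refine sum_congr rfl fun j hj => ?_
        have hj : j < n + 1 := (mem_range.1 hj).trans_le hk
        rw [toSeq_of_lt _ hj, htail]
    _ ≤ sumLargest (Fin.tail z) k := sum_range_toSeq_le_sumLargest _ hk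

theorem weaklyMajorizedBy_tail_of_min_le {n : ℕ} {x y z : Fin (n + 1) → ℝ}
    (hmaj : WeaklyMajorizedBy y x)
    (hz : ∀ k ≤ n, min (sumLargest x k) (sumLargest x (k + 1) - y 0) ≤ sumLargest (Fin.tail z) k) :
    WeaklyMajorizedBy (Fin.tail y) (Fin.tail z) := fun k hk₁ hk =>
  calc sumLargest (Fin.tail y) k ≤ min (sumLargest y k) (sumLargest y (k + 1) - y 0) :=
        le_min (sumLargest_tail_le y hk) (le_sub_iff_add_le'.2 (add_sumLargest_tail_le y hk))
    _ ≤ min (sumLargest x k) (sumLargest x (k + 1) - y 0) :=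
        min_le_min (hmaj k hk₁ (by omega)) (sub_le_sub_right (hmaj _ (by omega) (by omega)) _)
    _ ≤ sumLargest (Fin.tail z) k := hz k hk

theorem mem_Nbar_of_antitone {n : ℕ} {C : Set (Fin (n + 2) → ℝ)} (hconv : Convex ℝ C)
    (hsym : ∀ a ∈ C, ∀ σ : Equiv.Perm (Fin (n + 2)), a ∘ σ ∈ C) (hCN : C ⊆ Nbar (n + 2))
    {x : Fin (n + 2) → ℝ} (hx : x ∈ C) (hxa : Antitone x) {y : Fin (n + 2) → ℝ}
    (hy : ∀ i, 0 ≤ y i) (hya : Antitone y) (hmaj : WeaklyMajorizedBy y x) :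
    y ∈ Nbar (n + 2) := by
  have hpair : ∀ i j, i ≠ j → y i + y j ≤ 2 := fun i j =>
    add_le_two_of_weaklyMajorizedBy hconv hsym hCN hx hmaj
  refine mem_Nbar_iff.2 ⟨hy, fun i j hij => ?_, ?_⟩
  · nlinarith [hpair i j hij, hy i, hy j, sq_nonneg (y i - y j)]
  by_cases hle : ∀ i, y i ≤ 1
  · exact nbarPoly_nonneg hy hle
  obtain ⟨l, hl⟩ : ∃ l, 1 < y l := by simpa using hle
  set t := y 0
  have ht : 1 < t := hl.trans_le (hya (Fin.zero_le l))
  have htx : t ≤ x 0 :=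
    calc t = ∑ k ∈ {0}, y k := by simp [t]
      _ ≤ sumLargest y 1 := sum_le_sumLargest y (card_singleton 0)
      _ ≤ sumLargest x 1 := hmaj 1 le_rfl (by omega)
      _ ≤ x 0 := sumLargest_le x (by omega) fun s hs => by
          obtain ⟨a, rfl⟩ := card_eq_one.1 hs
          simpa using hxa (Fin.zero_le a)
  have hlast : x (Fin.last (n + 1)) < t := by
    linarith [add_le_two_of_mem hconv hsym hCN hx (Fin.last_pos.ne : (0 : Fin (n + 2)) ≠ _)]
  obtain ⟨z, hz, hz₀, hzk⟩ := exists_mem_min_le_sumLargest_tail hconv hsym hx hxa htx hlast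
  have hz₁ : ∀ j, Fin.tail z j < 1 := fun j => show z j.succ < 1 by
    linarith [hz₀ ▸ add_le_two_of_mem hconv hsym hCN hz (Fin.succ_ne_zero j).symm]
  have hy₁ : ∀ j, Fin.tail y j < 1 := fun j => show y j.succ < 1 by
    linarith [hpair 0 j.succ (Fin.succ_ne_zero j).symm]
  have hzN := (mem_Nbar_iff.1 (hCN hz)).2.2
  rw [← Fin.cons_self_tail z, hz₀] at hzN
  rw [← Fin.cons_self_tail y]
  exact nbarPoly_cons_nonneg_of_weaklyMajorizedBy ht.le hy₁ hz₁
    (weaklyMajorizedBy_tail_of_min_le hmaj hzk) hzN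

theorem weakMaj_mem_Nbar {m : ℕ} (hm : 2 ≤ m) (C : Set (Fin m → ℝ))
    (hconv : Convex ℝ C)
    (hsym : ∀ a ∈ C, ∀ σ : Equiv.Perm (Fin m), a ∘ σ ∈ C)
    (hCN : C ⊆ Nbar m)
    (x : Fin m → ℝ) (hx : x ∈ C)
    (y : Fin m → ℝ) (hy : ∀ i, 0 ≤ y i)
    (hmaj : WeaklyMajorizedBy y x) :
    y ∈ Nbar m := by
  obtain ⟨n, rfl⟩ : ∃ n, m = n + 2 := ⟨m - 2, by omega⟩
  obtain ⟨σ, hσ⟩ := exists_perm_antitone x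
  obtain ⟨τ, hτ⟩ := exists_perm_antitone y
  have hmaj' : WeaklyMajorizedBy (y ∘ τ) (x ∘ σ) := fun k hk₁ hk => by
    simpa only [sumLargest_comp_perm] using hmaj k hk₁ hk
  have hyτ := mem_Nbar_of_antitone hconv hsym hCN (hsym x hx σ) hσ (fun i => hy _) hτ hmaj'
  simpa [Function.comp_def] using comp_perm_mem_Nbar hyτ τ⁻¹
end
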